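/- For any function f : Sₙ → ℝ on the symmetric group such that |f(π) − f(π∘τ)| ≤ c for every transposition τ and permutation π, and π chosen uniformly at random, P[f(π) ≤ E[f(π)] − t] ≤ exp(−t²/(c²n)) for every t ≥ 0. -/

import Mathlib

/-!
Reveal a random permutation of `Fin (n + 1)` through `decomposeFin`: first `π 0 = p`, then a
uniform permutation of `Fin n`. Left multiplication by `swap p q` maps the fibre `π 0 = p` onto
the fibre `π 0 = q` and is a right multiplication by a transposition, so the fibre averages of
`f` lie in an interval of length `c`. Hoeffding's lemma for the uniform choice of `p`, combined
with induction on `n` inside the fibres, bounds the exponential moment: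
`𝔼 exp (L f) ≤ exp (L 𝔼 f + L² c² n / 8)`. Chernoff's bound with `L = 4 t / (c² n)` then gives
`exp (-2 t² / (c² n))`.
-/

open Real (exp exp_add)
open Finset ProbabilityTheory MeasureTheory
open scoped BigOperators

lemma integral_uniformOn_univ {ι : Type*} [Fintype ι] [MeasurableSpace ι]
    [MeasurableSingletonClass ι] (g : ι → ℝ) :
    ∫ x, g x ∂uniformOn (Set.univ : Set ι) = 𝔼 x, g x := by
  rw [Fintype.expect_eq_sum_div_card, uniformOn, ProbabilityTheory.cond, Measure.restrict_univ,
    integral_smul_measure, integral_count]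
  simp [div_eq_inv_mul]

lemma expect_exp_mul_le_of_forall_sub_le {ι : Type*} [Fintype ι] [Nonempty ι] {v : ι → ℝ}
    {c : ℝ} (hv : ∀ i j, v i - v j ≤ c) (L : ℝ) :
    𝔼 i, exp (L * v i) ≤ exp (L * 𝔼 i, v i + L ^ 2 * c ^ 2 / 8) := by
  let : MeasurableSpace ι := ⊤
  set μ : Measure ι := uniformOn Set.univ
  have : IsProbabilityMeasure μ :=
    isProbabilityMeasure_uniformOn Set.finite_univ Set.univ_nonempty
  obtain ⟨j, -, hj⟩ := exists_min_image univ v univ_nonempty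
  have hc : 0 ≤ c := by simpa using hv j j
  have hIcc : ∀ᵐ i ∂μ, v i ∈ Set.Icc (v j) (v j + c) :=
    ae_of_all _ fun i => ⟨hj i (mem_univ i), by linarith [hv i j]⟩
  have hmgf := (hasSubgaussianMGF_of_mem_Icc (Measurable.of_discrete (f := v)).aemeasurable
    hIcc).mgf_le L
  simp only [mgf, integral_uniformOn_univ, μ] at hmgf
  have hparam : (((‖v j + c - v j‖₊ / 2) ^ 2 : NNReal) : ℝ) = c ^ 2 / 4 := by
    simp only [add_sub_cancel_left, NNReal.coe_pow, NNReal.coe_div, coe_nnnorm, Real.norm_eq_abs,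
      abs_of_nonneg hc, NNReal.coe_ofNat]
    ring
  rw [hparam] at hmgf
  calc 𝔼 i, exp (L * v i) = exp (L * 𝔼 i, v i) * 𝔼 i, exp (L * (v i - 𝔼 i, v i)) := by
        rw [mul_expect]; congr! 1 with i; rw [← exp_add]; ring_nf
    _ ≤ exp (L * 𝔼 i, v i) * exp (c ^ 2 / 4 * L ^ 2 / 2) := by gcongr
    _ = exp (L * 𝔼 i, v i + L ^ 2 * c ^ 2 / 8) := by rw [← exp_add]; ring_nf

lemma expect_expect_exp_mul_le {ι β : Type*} [Fintype ι] [Nonempty ι] [Fintype β]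
    {g : ι → β → ℝ} {c K L : ℝ}
    (hfib : ∀ p, 𝔼 b, exp (L * g p b) ≤ exp (L * 𝔼 b, g p b + K))
    (havg : ∀ p q, 𝔼 b, g p b - 𝔼 b, g q b ≤ c) :
    𝔼 p, 𝔼 b, exp (L * g p b) ≤ exp (L * 𝔼 p, 𝔼 b, g p b + (K + L ^ 2 * c ^ 2 / 8)) :=
  calc 𝔼 p, 𝔼 b, exp (L * g p b)
      ≤ 𝔼 p, exp (L * 𝔼 b, g p b + K) := expect_le_expect fun p _ => hfib p
    _ = exp K * 𝔼 p, exp (L * 𝔼 b, g p b) := by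
        rw [mul_expect]; congr! 1 with p; rw [← exp_add, add_comm]
    _ ≤ exp K * exp (L * 𝔼 p, 𝔼 b, g p b + L ^ 2 * c ^ 2 / 8) := by
        gcongr; exact expect_exp_mul_le_of_forall_sub_le havg L
    _ = exp (L * 𝔼 p, 𝔼 b, g p b + (K + L ^ 2 * c ^ 2 / 8)) := by
        rw [← exp_add]; ring_nf

namespace Equiv.Perm

lemma expect_eq_expect_decomposeFin_symm {M : Type*} [AddCommMonoid M] [Module ℚ≥0 M] {n : ℕ}
    (F : Perm (Fin (n + 1)) → M) :
    𝔼 π, F π = 𝔼 p, 𝔼 σ, F (decomposeFin.symm (p, σ)) := by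
  rw [← expect_product', univ_product_univ]
  exact Fintype.expect_equiv decomposeFin _ _ fun π => by simp

lemma sum_decomposeFin_symm_eq_sum_ite {M : Type*} [AddCommMonoid M] {n : ℕ}
    (F : Perm (Fin (n + 1)) → M) (p : Fin (n + 1)) :
    ∑ σ, F (decomposeFin.symm (p, σ)) = ∑ π, if π 0 = p then F π else 0 := by
  rw [← decomposeFin.symm.sum_comp, Fintype.sum_prod_type]
  simp

lemma expect_decomposeFin_symm_swap {M : Type*} [AddCommMonoid M] [Module ℚ≥0 M] {n : ℕ}
    (F : Perm (Fin (n + 1)) → M) (p q : Fin (n + 1)) :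
    𝔼 σ, F (decomposeFin.symm (q, σ)) = 𝔼 σ, F (swap p q * decomposeFin.symm (p, σ)) := by
  unfold Finset.expect
  rw [sum_decomposeFin_symm_eq_sum_ite F q,
    sum_decomposeFin_symm_eq_sum_ite (fun π => F (swap p q * π)) p]
  congr 1
  exact (Fintype.sum_equiv (Equiv.mulLeft (swap p q)) _ _ fun π => by
    simp [swap_apply_eq_iff]).symm

lemma decomposeFin_symm_mul_swap {n : ℕ} (p : Fin (n + 1)) (σ : Perm (Fin n)) (i j : Fin n) :
    decomposeFin.symm (p, σ * swap i j) = decomposeFin.symm (p, σ) * swap i.succ j.succ := by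
  ext x
  refine Fin.cases ?_ (fun x => ?_) x
  · simp [swap_apply_of_ne_of_ne (Fin.succ_ne_zero i).symm (Fin.succ_ne_zero j).symm]
  · simp [(Fin.succ_injective n).swap_apply]

lemma abs_sub_swap_mul_le {α : Type*} [DecidableEq α] {f : Perm α → ℝ} {c : ℝ}
    (hf : ∀ π i j, |f π - f (π * swap i j)| ≤ c) (π : Perm α) (i j : α) :
    |f π - f (swap i j * π)| ≤ c := by
  rw [swap_mul_eq_mul_swap]; exact hf _ _ _

lemma expect_decomposeFin_symm_sub_le {n : ℕ} {f : Perm (Fin (n + 1)) → ℝ} {c : ℝ}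
    (hf : ∀ π i j, |f π - f (π * swap i j)| ≤ c) (p q : Fin (n + 1)) :
    𝔼 σ, f (decomposeFin.symm (p, σ)) - 𝔼 σ, f (decomposeFin.symm (q, σ)) ≤ c := by
  rw [expect_decomposeFin_symm_swap f p q, ← expect_sub_distrib]
  exact expect_le univ_nonempty fun σ _ =>
    (le_abs_self _).trans (abs_sub_swap_mul_le hf _ p q)

theorem expect_exp_mul_le {c : ℝ} : ∀ {n : ℕ} {f : Perm (Fin n) → ℝ},
    (∀ π i j, |f π - f (π * swap i j)| ≤ c) → ∀ L : ℝ,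
    𝔼 π, exp (L * f π) ≤ exp (L * 𝔼 π, f π + L ^ 2 * c ^ 2 * n / 8)
  | 0, f, _, L => by simp
  | n + 1, f, hf, L => by
    have hfib (p : Fin (n + 1)) := expect_exp_mul_le (n := n)
      (f := fun σ => f (decomposeFin.symm (p, σ)))
      (fun σ i j => by simpa only [decomposeFin_symm_mul_swap] using hf _ i.succ j.succ) L
    rw [expect_eq_expect_decomposeFin_symm, expect_eq_expect_decomposeFin_symm]
    convert expect_expect_exp_mul_le hfib (expect_decomposeFin_symm_sub_le hf) using 3
    push_cast; ring

end Equiv.Perm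

lemma card_filter_le_div_card_le_expect {ι : Type*} [Fintype ι] (g : ι → ℝ) (s : ℝ) {L : ℝ}
    (hL : 0 ≤ L) :
    (#{i | g i ≤ s} : ℝ) / Fintype.card ι ≤ 𝔼 i, exp (L * (s - g i)) := by
  rw [natCast_card_filter, Fintype.expect_eq_sum_div_card]
  gcongr with i
  split_ifs with h
  · exact Real.one_le_exp (mul_nonneg hL (sub_nonneg.2 h))
  · exact (Real.exp_pos _).le

/-- Maurey/McDiarmid concentration on the symmetric group:
if `f : Sₙ → ℝ` changes by at most `c` when the permutation is composed with
a transposition, then for `π` uniformly random and any `t ≥ 0`,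
`P[f(π) ≤ E[f] − t] ≤ exp(−t²/(c²n))`. -/
theorem stmt9 (n : ℕ) (hn : 0 < n) (c t : ℝ) (hc : 0 < c) (ht : 0 ≤ t)
    (f : Equiv.Perm (Fin n) → ℝ)
    (hf : ∀ (π : Equiv.Perm (Fin n)) (i j : Fin n),
      |f π - f (π * Equiv.swap i j)| ≤ c) :
    ((Finset.univ.filter fun π : Equiv.Perm (Fin n) =>
        f π ≤ (∑ σ : Equiv.Perm (Fin n), f σ) / (Nat.factorial n : ℝ) - t).card : ℝ)
        / (Nat.factorial n : ℝ)
      ≤ Real.exp (-(t ^ 2) / (c ^ 2 * n)) := by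
  have hmean : (∑ σ, f σ) / (n.factorial : ℝ) = 𝔼 σ, f σ := by
    simp [Fintype.expect_eq_sum_div_card, Fintype.card_perm]
  have hcn : 0 < c ^ 2 * n := by positivity
  set L := 4 * t / (c ^ 2 * n)
  have hL : 0 ≤ L := by positivity
  have hcard : (n.factorial : ℝ) = Fintype.card (Equiv.Perm (Fin n)) := by
    simp [Fintype.card_perm]
  rw [hmean, hcard]
  calc _ ≤ 𝔼 π, exp (L * (𝔼 σ, f σ - t - f π)) := card_filter_le_div_card_le_expect f _ hL
    _ = exp (L * (𝔼 σ, f σ - t)) * 𝔼 π, exp (-L * f π) := by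
        rw [mul_expect]; congr! 1 with π; rw [← exp_add]; ring_nf
    _ ≤ exp (L * (𝔼 σ, f σ - t)) * exp (-L * 𝔼 σ, f σ + (-L) ^ 2 * c ^ 2 * n / 8) := by
        gcongr; exact Equiv.Perm.expect_exp_mul_le hf (-L)
    _ = exp (-(2 * t ^ 2) / (c ^ 2 * n)) := by
        rw [← exp_add]; congr 1; simp only [L]; field_simp; ring
    _ ≤ exp (-(t ^ 2) / (c ^ 2 * n)) := by
        gcongr; linarith [sq_nonneg t]
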